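/- Let G be the group of pairs (a,b) ∈ (ℤ/8ℤ)* × ℤ/8ℤ with multiplication (a,b)·(c,d) = (ac, b + ad), and let H₁ = {(a,0) : a ∈ (ℤ/8ℤ)*} and H₂ = {(1,0), (3,4), (5,4), (7,0)}. Then H₁ and H₂ are not conjugate in G: for every g ∈ G one has g H₁ g⁻¹ ≠ H₂. -/
import Mathlib


/-- The group of pairs `(a, b) ∈ (ℤ/8ℤ)* × ℤ/8ℤ` with multiplication
`(a,b)·(c,d) = (ac, b + ad)`, i.e. the semidirect product `ℤ/8ℤ ⋊ (ℤ/8ℤ)*`. -/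
@[ext] structure G8 : Type where
  a : (ZMod 8)ˣ
  b : ZMod 8
deriving DecidableEq

instance : Fintype G8 :=
  Fintype.ofEquiv ((ZMod 8)ˣ × ZMod 8)
    { toFun := fun _q => ⟨_q.1, _q.2⟩
      invFun := fun h => (h.a, h.b)
      left_inv := fun _q => rfl
      right_inv := fun _ => rfl }

instance : Mul G8 := ⟨fun x y => ⟨x.a * y.a, x.b + (x.a : ZMod 8) * y.b⟩⟩
instance : One G8 := ⟨⟨1, 0⟩⟩
instance : Inv G8 := ⟨fun x => ⟨x.a⁻¹, -(((x.a⁻¹ : (ZMod 8)ˣ) : ZMod 8) * x.b)⟩⟩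

lemma G8.mul_def (x y : G8) : x * y = ⟨x.a * y.a, x.b + (x.a : ZMod 8) * y.b⟩ := rfl
lemma G8.one_def : (1 : G8) = ⟨1, 0⟩ := rfl
lemma G8.inv_def (x : G8) : x⁻¹ = ⟨x.a⁻¹, -(((x.a⁻¹ : (ZMod 8)ˣ) : ZMod 8) * x.b)⟩ := rfl

instance : Group G8 where
  mul_assoc x y z := by
    simp only [G8.mul_def]
    ext <;> simp [mul_assoc, mul_add, Units.val_mul, add_assoc]
  one_mul x := by
    simp only [G8.mul_def, G8.one_def]
    ext <;> simp
  mul_one x := by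
    simp only [G8.mul_def, G8.one_def]
    ext <;> simp
  inv_mul_cancel x := by
    simp only [G8.mul_def, G8.inv_def, G8.one_def]
    ext <;> simp

/-- The unit `3` of `ℤ/8ℤ` (self-inverse since `3² = 9 = 1`). -/
def u3 : (ZMod 8)ˣ := ⟨3, 3, by decide, by decide⟩
/-- The unit `5` of `ℤ/8ℤ`. -/
def u5 : (ZMod 8)ˣ := ⟨5, 5, by decide, by decide⟩
/-- The unit `7` of `ℤ/8ℤ`. -/
def u7 : (ZMod 8)ˣ := ⟨7, 7, by decide, by decide⟩

/-- The subgroup `H₁ = {(a, 0)}` of `G8`, as a set. -/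
def H1set : Set G8 := {g : G8 | g.b = 0}

/-- The set `H₂ = {(1,0), (3,4), (5,4), (7,0)}` in `G8`. -/
def H2set : Set G8 := {⟨1, 0⟩, ⟨u3, 4⟩, ⟨u5, 4⟩, ⟨u7, 0⟩}

/-- The conjugacy class of `g` in `G8`. -/
def conjClass (g : G8) : Set G8 := {y : G8 | ∃ x : G8, x * g * x⁻¹ = y}

lemma key37 : ∀ g : G8,
    ¬(g * ⟨u3, 0⟩ * g⁻¹ ∈ H2set ∧ g * ⟨u7, 0⟩ * g⁻¹ ∈ H2set) := by
  simp only [H2set, Set.mem_insert_iff, Set.mem_singleton_iff]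
  decide

/-- **Non-conjugacy of the Sunada subgroups.** In `G8`, the subgroups
`H₁ = {(a,0)}` and `H₂ = {(1,0), (3,4), (5,4), (7,0)}` are not conjugate:
`g H₁ g⁻¹ ≠ H₂` for every `g`. -/
theorem stmt15 : ∀ g : G8, (fun h => g * h * g⁻¹) '' H1set ≠ H2set := by
  intro g h
  have h3 : g * ⟨u3, 0⟩ * g⁻¹ ∈ H2set := by
    rw [← h]; exact ⟨⟨u3, 0⟩, rfl, rfl⟩
  have h7 : g * ⟨u7, 0⟩ * g⁻¹ ∈ H2set := by
    rw [← h]; exact ⟨⟨u7, 0⟩, rfl, rfl⟩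
  exact key37 g ⟨h3, h7⟩
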